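/- arXiv:2508.05877 — 7 statements merged into one kernel-verified Lean document; each statement's English description precedes it below -/
import Mathlib

section
/- Let 𝒫 be a set of paths (finite lists of distinct customers) closed under taking contiguous sublists, and let Q : 𝒫 → ℝ be a nonnegative function with Q(()) = 0. Then Q is superadditive under concatenation (i.e., Q(p1 ++ p2) ≥ Q(p1) + Q(p2) for all p1, p2 ∈ 𝒫 with p1 ++ p2 ∈ 𝒫) if and only if for every path p = (i_1, …, i_t) ∈ 𝒫 there exists a vector θ ∈ ℝ^t with θ_k ≥ 0 for all k ∈ {1, …, t}, ∑_{k=1}^t θ_k = Q(p), and ∑_{k=a}^{b} θ_k ≥ Q((i_a, …, i_b)) for all indices 1 ≤ a ≤ b ≤ t. -/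
/-- Let `Paths` be a set of paths (finite lists of distinct customers) closed
under taking contiguous sublists, and let `Q` be a nonnegative function on `Paths` with
`Q [] = 0`.  Then `Q` is superadditive under concatenation if and only if for every path
`p = (i_1, …, i_t) ∈ Paths` there exists a vector `θ` of nonnegative entries summing to `Q p`
such that every contiguous segment `(i_a, …, i_b)` of `p` receives at least its own
recourse cost `Q (i_a, …, i_b)`. -/
theorem dl_shaped_validity_iff_superadditive
    {N : Type*} (Paths : Set (List N)) (Q : List N → ℝ)
    (hnodup : ∀ p ∈ Paths, p.Nodup)
    (hclosed : ∀ p ∈ Paths, ∀ p' : List N, p' <:+: p → p' ∈ Paths)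
    (hnonneg : ∀ p ∈ Paths, 0 ≤ Q p)
    (hempty : Q [] = 0) :
    (∀ p1 ∈ Paths, ∀ p2 ∈ Paths, p1 ++ p2 ∈ Paths → Q p1 + Q p2 ≤ Q (p1 ++ p2)) ↔
      (∀ p ∈ Paths, ∃ θ : ℕ → ℝ,
        (∀ k < p.length, 0 ≤ θ k) ∧
        (∑ k ∈ Finset.range p.length, θ k) = Q p ∧
        (∀ a b : ℕ, a ≤ b → b < p.length →
          Q ((p.drop a).take (b + 1 - a)) ≤ ∑ k ∈ Finset.Icc a b, θ k)) := by
  constructor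
  · intro hsup p hp
    have htakein : ∀ n, p.take n ∈ Paths := fun n =>
      hclosed p hp _ (List.take_prefix n p).isInfix
    have hsegin : ∀ a m, (p.drop a).take m ∈ Paths := fun a m =>
      hclosed p hp _ (((List.take_prefix _ _).isInfix).trans (List.drop_suffix a p).isInfix)
    have hseg0 : ∀ a b : ℕ, a ≤ b → b < p.length →
        Q ((p.drop a).take (b + 1 - a)) ≤ Q (p.take (b+1)) - Q (p.take a) := by
      intro a b hab hb
      have hsplit : p.take (b+1) = p.take a ++ (p.drop a).take (b + 1 - a) := by
        rw [← List.take_add]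
        congr 1
        omega
      have := hsup (p.take a) (htakein a) _ (hsegin a (b+1-a))
        (by rw [← hsplit]; exact htakein (b+1))
      rw [← hsplit] at this
      linarith
    have hIcc : ∀ a b : ℕ, a ≤ b →
        ∑ k ∈ Finset.Icc a b, (Q (p.take (k+1)) - Q (p.take k))
          = Q (p.take (b+1)) - Q (p.take a) := by
      intro a b hab
      have : Finset.Icc a b = Finset.Ico a (b+1) := by
        rw [Finset.Ico_add_one_right_eq_Icc]
      rw [this, Finset.sum_Ico_eq_sub _ (by omega), Finset.sum_range_sub (fun n => Q (p.take n)),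
        Finset.sum_range_sub (fun n => Q (p.take n))]
      ring
    refine ⟨fun k => Q (p.take (k+1)) - Q (p.take k), ?_, ?_, ?_⟩
    · intro k hk
      have h1 := hseg0 k k le_rfl hk
      have h2 := hnonneg _ (hsegin k (k+1-k))
      show 0 ≤ Q (p.take (k+1)) - Q (p.take k)
      linarith
    · rw [Finset.sum_range_sub (fun n => Q (p.take n)), List.take_length]
      simp [hempty]
    · intro a b hab hb
      rw [hIcc a b hab]
      exact hseg0 a b hab hb
  · intro hdec p1 hp1 p2 hp2 hp
    rcases eq_or_ne p1 [] with rfl | h1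
    · simp [hempty]
    rcases eq_or_ne p2 [] with rfl | h2
    · simp [hempty]
    obtain ⟨θ, hpos, hsum, hseg⟩ := hdec _ hp
    have hm : 1 ≤ p1.length := List.length_pos_iff.mpr h1
    have hn : 1 ≤ p2.length := List.length_pos_iff.mpr h2
    have hlen : (p1 ++ p2).length = p1.length + p2.length := List.length_append
    have h1' : Q p1 ≤ ∑ k ∈ Finset.Icc 0 (p1.length - 1), θ k := by
      have := hseg 0 (p1.length - 1) (Nat.zero_le _) (by omega)
      have he : ((p1 ++ p2).drop 0).take (p1.length - 1 + 1 - 0) = p1 := by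
        rw [List.drop_zero]
        have : p1.length - 1 + 1 - 0 = p1.length := by omega
        rw [this, List.take_left]
      rwa [he] at this
    have h2' : Q p2 ≤ ∑ k ∈ Finset.Icc p1.length ((p1++p2).length - 1), θ k := by
      have := hseg p1.length ((p1++p2).length - 1) (by omega) (by omega)
      have he : ((p1 ++ p2).drop p1.length).take ((p1++p2).length - 1 + 1 - p1.length) = p2 := by
        rw [List.drop_left]
        have : (p1++p2).length - 1 + 1 - p1.length = p2.length := by omega
        rw [this, List.take_length]
      rwa [he] at this
    have hsplitsum : ∑ k ∈ Finset.Icc 0 (p1.length - 1), θ k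
        + ∑ k ∈ Finset.Icc p1.length ((p1++p2).length - 1), θ k
        = ∑ k ∈ Finset.range (p1++p2).length, θ k := by
      rw [show Finset.Icc 0 (p1.length - 1) = Finset.Ico 0 p1.length by
            rw [← Finset.Ico_add_one_right_eq_Icc]; congr 1; omega,
          show Finset.Icc p1.length ((p1++p2).length - 1)
              = Finset.Ico p1.length ((p1++p2).length) by
            rw [← Finset.Ico_add_one_right_eq_Icc]; congr 1; omega,
          Finset.sum_Ico_consecutive _ (by omega) (by omega), Finset.range_eq_Ico]
    linarith [hsplitsum, hsum]
end

section
/- Let 𝒫 be a set of paths closed under taking contiguous sublists and let Q : 𝒫 → ℝ be nonnegative with Q(()) = 0 and superadditive under concatenation. For a path p = (i_1, …, i_t) ∈ 𝒫, define the marginal contributions θ_k := Q((i_1, …, i_k)) − Q((i_1, …, i_{k−1})) for k ∈ {1, …, t}. Then (i) θ_k ≥ 0 for every k; (ii) ∑_{k=1}^t θ_k = Q(p); and (iii) for all indices 1 ≤ a ≤ b ≤ t, ∑_{k=a}^{b} θ_k ≥ Q((i_a, …, i_b)). -/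
/-! Superadditivity applied to `p.take a ++ (p.drop a).take m = p.take (a + m)` shows that the
increment of `k ↦ Q (p.take k)` over any block of indices dominates `Q` of the corresponding
segment; the marginal contributions telescope to these increments, so (iii) is this inequality,
(i) is its one-element case combined with `0 ≤ Q`, and (ii) is the full telescoping sum. -/

section MarginalContributions

variable {N : Type*} {Paths : Set (List N)} {Q : List N → ℝ}

theorem List.take_drop_infix (l : List N) (a m : ℕ) : (l.drop a).take m <:+: l :=
  ((l.drop a).take_prefix m).isInfix.trans (l.drop_suffix a).isInfix

theorem take_add_superadditive
    (hclosed : ∀ p ∈ Paths, ∀ p' : List N, p' <:+: p → p' ∈ Paths)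
    (hsuper : ∀ p1 ∈ Paths, ∀ p2 ∈ Paths, p1 ++ p2 ∈ Paths → Q p1 + Q p2 ≤ Q (p1 ++ p2))
    {p : List N} (hp : p ∈ Paths) (a m : ℕ) :
    Q (p.take a) + Q ((p.drop a).take m) ≤ Q (p.take (a + m)) := by
  have htake : ∀ n, p.take n ∈ Paths := fun n => hclosed p hp _ (p.take_prefix n).isInfix
  have h := hsuper _ (htake a) _ (hclosed p hp _ (p.take_drop_infix a m))
    (by rw [← List.take_add]; exact htake (a + m))
  rwa [← List.take_add] at h

end MarginalContributions

theorem marginal_contributions_valid_general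
    {N : Type*} (Paths : Set (List N)) (Q : List N → ℝ)
    (hclosed : ∀ p ∈ Paths, ∀ p' : List N, p' <:+: p → p' ∈ Paths)
    (hnonneg : ∀ p ∈ Paths, 0 ≤ Q p)
    (hempty : Q [] = 0)
    (hsuper : ∀ p1 ∈ Paths, ∀ p2 ∈ Paths, p1 ++ p2 ∈ Paths → Q p1 + Q p2 ≤ Q (p1 ++ p2))
    (p : List N) (hp : p ∈ Paths)
    (θ : ℕ → ℝ) (hθ : ∀ k, θ k = Q (p.take (k + 1)) - Q (p.take k)) :
    (∀ k < p.length, 0 ≤ θ k) ∧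
    (∑ k ∈ Finset.range p.length, θ k) = Q p ∧
    (∀ a b : ℕ, a ≤ b → b < p.length →
      Q ((p.drop a).take (b + 1 - a)) ≤ ∑ k ∈ Finset.Icc a b, θ k) := by
  simp only [hθ]
  have hsegment : ∀ a b : ℕ, a ≤ b →
      Q ((p.drop a).take (b + 1 - a)) ≤
        ∑ k ∈ Finset.Icc a b, (Q (p.take (k + 1)) - Q (p.take k)) := by
    intro a b hab
    have h := take_add_superadditive hclosed hsuper hp a (b + 1 - a)
    rw [Nat.add_sub_cancel' (by omega)] at h
    rw [Finset.sum_Icc_sub hab fun k => Q (p.take k)]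
    linarith
  refine ⟨fun k _ => ?_, ?_, fun a b hab _ => hsegment a b hab⟩
  · have h := (hnonneg _ (hclosed p hp _ (p.take_drop_infix k (k + 1 - k)))).trans
      (hsegment k k le_rfl)
    rwa [Finset.Icc_self, Finset.sum_singleton] at h
  · rw [Finset.sum_range_sub (fun k => Q (p.take k)), List.take_length, List.take_zero, hempty,
      sub_zero]

/-- If `Q` is nonnegative on a set of paths `Paths` closed under contiguous
sublists, with `Q [] = 0`, and is superadditive under concatenation, then for any path
`p ∈ Paths` the marginal contributions `θ k = Q (i_1,…,i_{k+1}) − Q (i_1,…,i_k)` are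
(i) nonnegative, (ii) sum to `Q p`, and (iii) dominate the recourse of every contiguous
segment of `p`. -/
theorem marginal_contributions_valid
    {N : Type*} (Paths : Set (List N)) (Q : List N → ℝ)
    (hnodup : ∀ p ∈ Paths, p.Nodup)
    (hclosed : ∀ p ∈ Paths, ∀ p' : List N, p' <:+: p → p' ∈ Paths)
    (hnonneg : ∀ p ∈ Paths, 0 ≤ Q p)
    (hempty : Q [] = 0)
    (hsuper : ∀ p1 ∈ Paths, ∀ p2 ∈ Paths, p1 ++ p2 ∈ Paths → Q p1 + Q p2 ≤ Q (p1 ++ p2))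
    (p : List N) (hp : p ∈ Paths)
    (θ : ℕ → ℝ) (hθ : ∀ k, θ k = Q (p.take (k + 1)) - Q (p.take k)) :
    (∀ k < p.length, 0 ≤ θ k) ∧
    (∑ k ∈ Finset.range p.length, θ k) = Q p ∧
    (∀ a b : ℕ, a ≤ b → b < p.length →
      Q ((p.drop a).take (b + 1 - a)) ≤ ∑ k ∈ Finset.Icc a b, θ k) :=
  marginal_contributions_valid_general Paths Q hclosed hnonneg hempty hsuper p hp θ hθ
end

section
/- Assume the demands satisfy the monotonicity property. Then for every path p of distinct customers and every subsequence p' of p, the DTD recourse costs satisfy Q^DTD_{p'} ≤ Q^DTD_{p}, and likewise Q̄^DTD_{p'} ≤ Q̄^DTD_{p} for the fixed-orientation costs. -/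
open MeasureTheory ENNReal

/-- The detour-to-depot (DTD) recourse cost of the route `(0, p, 0)` in the orientation
given by the path `p`:
`Q̄ᴰᵀᴰ_p = ∑_{j=1}^{t} ∑_{l=1}^{∞} P[ ∑_{k<j} ξ_{i_k} ≤ lQ < ∑_{k≤j} ξ_{i_k} ] · c^F_{i_j}`,
a series of nonnegative terms evaluated in `[0, ∞]`. -/
noncomputable def QbarDTD {Ω N : Type*} [MeasurableSpace Ω] (μ : Measure Ω)
    (ξ : N → Ω → ℝ) (Q : ℝ) (cF : N → ℝ) (p : List N) : ℝ≥0∞ :=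
  ∑ j : Fin p.length, ∑' l : ℕ,
    μ {ω | ((p.take j).map (fun i => ξ i ω)).sum ≤ (l + 1 : ℕ) * Q ∧
           ((l + 1 : ℕ) : ℝ) * Q < ((p.take (j + 1)).map (fun i => ξ i ω)).sum}
      * ENNReal.ofReal (cF (p.get j))

/-- `Qᴰᵀᴰ_p`: the DTD recourse cost of the route `(0, p, 0)` in its best orientation. -/
noncomputable def QDTD {Ω N : Type*} [MeasurableSpace Ω] (μ : Measure Ω)
    (ξ : N → Ω → ℝ) (Q : ℝ) (cF : N → ℝ) (p : List N) : ℝ≥0∞ :=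
  min (QbarDTD μ ξ Q cF p) (QbarDTD μ ξ Q cF p.reverse)

/-- The monotonicity property of the demands (Definition 2 of the paper). -/
def MonotonicityProperty {Ω N : Type*} [MeasurableSpace Ω] [DecidableEq N]
    (μ : Measure Ω) (ξ : N → Ω → ℝ) (Q : ℝ) : Prop :=
  ∀ (St : Finset N) (a b : N), a ≠ b → a ∉ St → b ∉ St → ∀ l : ℕ, 1 ≤ l →
    μ {ω | (∑ i ∈ St, ξ i ω) ≤ (l : ℝ) * Q ∧ (l : ℝ) * Q < ∑ i ∈ insert b St, ξ i ω}
      ≤ μ {ω | (∑ i ∈ insert a St, ξ i ω) ≤ (l : ℝ) * Q ∧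
               (l : ℝ) * Q < ∑ i ∈ insert b (insert a St), ξ i ω}

section Aux
variable {Ω N : Type*} [MeasurableSpace Ω] [DecidableEq N]
  (μ : Measure Ω) (ξ : N → Ω → ℝ) (Q : ℝ) (cF : N → ℝ)

noncomputable def dtdTerm (S : Finset N) (b : N) : ℝ≥0∞ :=
  ∑' l : ℕ, μ {ω | (∑ i ∈ S, ξ i ω) ≤ ((l + 1 : ℕ) : ℝ) * Q ∧
      ((l + 1 : ℕ) : ℝ) * Q < ∑ i ∈ insert b S, ξ i ω} * ENNReal.ofReal (cF b)

noncomputable def dtdAux : Finset N → List N → ℝ≥0∞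
  | _, [] => 0
  | S, a :: p => dtdTerm μ ξ Q cF S a + dtdAux (insert a S) p

lemma core_mono (hmono : MonotonicityProperty μ ξ Q) :
    ∀ (n : ℕ) (S T : Finset N) (b : N), (T \ S).card = n → S ⊆ T → b ∉ T →
    ∀ l : ℕ, 1 ≤ l →
    μ {ω | (∑ i ∈ S, ξ i ω) ≤ (l : ℝ) * Q ∧ (l : ℝ) * Q < ∑ i ∈ insert b S, ξ i ω}
      ≤ μ {ω | (∑ i ∈ T, ξ i ω) ≤ (l : ℝ) * Q ∧ (l : ℝ) * Q < ∑ i ∈ insert b T, ξ i ω} := by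
  intro n
  induction n with
  | zero =>
    intro S T b hcard hST hb l hl
    have : S = T := Finset.Subset.antisymm hST (by
      intro x hx
      by_contra hxS
      have : x ∈ T \ S := Finset.mem_sdiff.mpr ⟨hx, hxS⟩
      rw [Finset.card_eq_zero.mp hcard] at this
      simp at this)
    subst this; exact le_rfl
  | succ n ih =>
    intro S T b hcard hST hb l hl
    have hne : (T \ S).Nonempty := Finset.card_pos.mp (by omega)
    obtain ⟨a, ha⟩ := hne
    obtain ⟨haT, haS⟩ := Finset.mem_sdiff.mp ha
    have hab : a ≠ b := fun h => hb (h ▸ haT)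
    have hbS : b ∉ S := fun h => hb (hST h)
    have h1 := hmono S a b hab haS hbS l hl
    refine h1.trans (ih (insert a S) T b ?_ (Finset.insert_subset haT hST) hb l hl)
    have he : T \ insert a S = (T \ S).erase a := by
      ext x
      simp only [Finset.mem_sdiff, Finset.mem_erase, Finset.mem_insert, not_or]
      tauto
    rw [he, Finset.card_erase_of_mem ha, hcard]; omega

lemma dtdTerm_mono (hmono : MonotonicityProperty μ ξ Q) {S T : Finset N} {b : N}
    (hST : S ⊆ T) (hb : b ∉ T) :
    dtdTerm μ ξ Q cF S b ≤ dtdTerm μ ξ Q cF T b := by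
  refine ENNReal.tsum_le_tsum fun l => mul_le_mul_left ?_ _
  exact_mod_cast core_mono μ ξ Q hmono _ S T b rfl hST hb (l + 1) (by omega)

lemma dtdAux_mono (hmono : MonotonicityProperty μ ξ Q) :
    ∀ {p' p : List N}, List.Sublist p' p → ∀ S T : Finset N, S ⊆ T →
    p.Nodup → (∀ x ∈ p, x ∉ T) →
    dtdAux μ ξ Q cF S p' ≤ dtdAux μ ξ Q cF T p := by
  intro p' p hsub
  induction hsub with
  | slnil => intro S T _ _ _; simp [dtdAux]
  | @cons p' p a h ih =>
    intro S T hST hnd hdisj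
    have h1 : dtdAux μ ξ Q cF S p' ≤ dtdAux μ ξ Q cF (insert a T) p := by
      refine ih S _ (hST.trans (Finset.subset_insert _ _)) hnd.of_cons fun x hx => ?_
      simp only [Finset.mem_insert, not_or]
      exact ⟨fun hxa => (List.nodup_cons.mp hnd).1 (hxa ▸ hx),
        hdisj x (List.mem_cons_of_mem _ hx)⟩
    refine h1.trans ?_
    show dtdAux μ ξ Q cF (insert a T) p ≤ dtdTerm μ ξ Q cF T a + dtdAux μ ξ Q cF (insert a T) p
    exact le_add_self
  | @cons_cons p' p a h ih =>
    intro S T hST hnd hdisj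
    show dtdTerm μ ξ Q cF S a + dtdAux μ ξ Q cF (insert a S) p' ≤
         dtdTerm μ ξ Q cF T a + dtdAux μ ξ Q cF (insert a T) p
    refine add_le_add (dtdTerm_mono μ ξ Q cF hmono hST (hdisj a List.mem_cons_self)) ?_
    refine ih (insert a S) (insert a T) (Finset.insert_subset_insert _ hST) hnd.of_cons
      fun x hx => ?_
    simp only [Finset.mem_insert, not_or]
    exact ⟨fun hxa => (List.nodup_cons.mp hnd).1 (hxa ▸ hx),
      hdisj x (List.mem_cons_of_mem _ hx)⟩

lemma QbarDTD_eq_aux :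
    ∀ (p r : List N), (r ++ p).Nodup →
    (∑ j : Fin p.length, ∑' l : ℕ,
      μ {ω | (((r ++ p.take j).map (fun i => ξ i ω)).sum) ≤ ((l + 1 : ℕ) : ℝ) * Q ∧
             ((l + 1 : ℕ) : ℝ) * Q < ((r ++ p.take (j + 1)).map (fun i => ξ i ω)).sum}
        * ENNReal.ofReal (cF (p.get j)))
      = dtdAux μ ξ Q cF r.toFinset p := by
  intro p
  induction p with
  | nil => intro r _; simp [dtdAux]
  | cons a p ih =>
    intro r hnd
    have har : a ∉ r := by
      rw [List.nodup_append] at hnd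
      exact fun h => hnd.2.2 a h a List.mem_cons_self rfl
    have hrnd : r.Nodup := (List.nodup_append.mp hnd).1
    have hrand : (r ++ [a]).Nodup := by
      rw [List.nodup_append]
      exact ⟨hrnd, List.nodup_singleton a, by
        intro x hx y hy hxy
        simp only [List.mem_singleton] at hy
        subst hy; subst hxy; exact har hx⟩
    have hfin : (r ++ [a]).toFinset = insert a r.toFinset := by
      simp only [List.toFinset_append, List.toFinset_cons, List.toFinset_nil,
        LawfulSingleton.insert_empty_eq]
      rw [Finset.union_comm, ← Finset.insert_eq]
    show (∑ j : Fin (p.length + 1), _) = _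
    rw [Fin.sum_univ_succ]
    have hrest := ih (r ++ [a]) (by simpa using hnd)
    rw [hfin] at hrest
    show _ + (∑ j : Fin p.length, _) = dtdTerm μ ξ Q cF r.toFinset a +
      dtdAux μ ξ Q cF (insert a r.toFinset) p
    congr 1
    · unfold dtdTerm
      refine tsum_congr fun l => ?_
      congr 2
      ext ω
      have h0 : ((r ++ (a :: p).take ((0 : Fin (p.length+1)) : ℕ)).map
          (fun i => ξ i ω)).sum = ∑ i ∈ r.toFinset, ξ i ω := by
        simp [List.sum_toFinset _ hrnd]
      have h1 : ((r ++ (a :: p).take (((0 : Fin (p.length+1)) : ℕ) + 1)).map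
          (fun i => ξ i ω)).sum = ∑ i ∈ insert a r.toFinset, ξ i ω := by
        rw [← hfin, List.sum_toFinset _ hrand]
        simp
      rw [Set.mem_setOf_eq, Set.mem_setOf_eq, h0, h1]
    · rw [← hrest]
      refine Finset.sum_congr rfl fun j _ => ?_
      refine tsum_congr fun l => ?_
      have e1 : r ++ (a :: p).take ((j.succ : Fin (p.length+1)) : ℕ)
          = (r ++ [a]) ++ p.take j := by
        simp [List.take_cons, List.append_assoc]
      have e2 : r ++ (a :: p).take (((j.succ : Fin (p.length+1)) : ℕ) + 1)
          = (r ++ [a]) ++ p.take (j + 1) := by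
        simp [List.take_cons, List.append_assoc]
      congr 2
      ext ω
      rw [Set.mem_setOf_eq, Set.mem_setOf_eq, e1, e2]

lemma QbarDTD_eq (p : List N) (hp : p.Nodup) :
    QbarDTD μ ξ Q cF p = dtdAux μ ξ Q cF ∅ p := by
  have := QbarDTD_eq_aux μ ξ Q cF p [] (by simpa using hp)
  simpa [QbarDTD] using this

end Aux

/-- under the monotonicity property, the DTD recourse cost of any path
dominates that of each of its subsequences, both for the fixed-orientation cost `Q̄ᴰᵀᴰ`
and for the best-orientation cost `Qᴰᵀᴰ`. -/
theorem dtd_monotone_wrt_subsequences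
    {Ω N : Type*} [MeasurableSpace Ω] [Fintype N] [DecidableEq N]
    (μ : Measure Ω) [IsProbabilityMeasure μ]
    (ξ : N → Ω → ℝ) (hmeas : ∀ i, Measurable (ξ i)) (hξ : ∀ i ω, 0 ≤ ξ i ω)
    (Q : ℝ) (hQ : 0 < Q) (cF : N → ℝ) (hcF : ∀ i, 0 ≤ cF i)
    (hmono : MonotonicityProperty μ ξ Q)
    (p : List N) (hp : p.Nodup) (p' : List N) (hsub : List.Sublist p' p) :
    QDTD μ ξ Q cF p' ≤ QDTD μ ξ Q cF p ∧
    QbarDTD μ ξ Q cF p' ≤ QbarDTD μ ξ Q cF p := by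
  have key : ∀ (q' q : List N), List.Sublist q' q → q.Nodup →
      QbarDTD μ ξ Q cF q' ≤ QbarDTD μ ξ Q cF q := by
    intro q' q hs hq
    rw [QbarDTD_eq μ ξ Q cF q' (hs.nodup hq), QbarDTD_eq μ ξ Q cF q hq]
    exact dtdAux_mono μ ξ Q cF hmono hs ∅ ∅ (le_refl _) hq (by simp)
  refine ⟨?_, key p' p hsub hp⟩
  exact min_le_min (key p' p hsub hp)
    (key p'.reverse p.reverse (hsub.reverse) (by simpa using hp))
end

section
/- Assume the demands satisfy the monotonicity property. Then for every pair of disjoint finite sets S̃, A ⊆ N, every customer b ∈ N ∖ (S̃ ∪ A), and every integer l ≥ 1, one has P[ ∑_{i∈S̃∪A} ξ_i ≤ lQ < ∑_{i∈S̃∪A∪{b}} ξ_i ] ≥ P[ ∑_{i∈S̃} ξ_i ≤ lQ < ∑_{i∈S̃∪{b}} ξ_i ]; that is, the probability bound of the monotonicity property iterates over any finite set A of additional customers inserted before b. -/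
open MeasureTheory

/-- the probability bound of the monotonicity property iterates over any
finite set `A` of additional customers inserted before `b`. -/
theorem monotonicity_property_iterates
    {Ω N : Type*} [MeasurableSpace Ω] [Fintype N] [DecidableEq N]
    (μ : Measure Ω) [IsProbabilityMeasure μ]
    (ξ : N → Ω → ℝ) (hmeas : ∀ i, Measurable (ξ i)) (hξ : ∀ i ω, 0 ≤ ξ i ω)
    (Q : ℝ) (hQ : 0 < Q)
    (hmono : MonotonicityProperty μ ξ Q)
    (St A : Finset N) (hdisj : Disjoint St A)
    (b : N) (hbS : b ∉ St) (hbA : b ∉ A)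
    (l : ℕ) (hl : 1 ≤ l) :
    μ {ω | (∑ i ∈ St, ξ i ω) ≤ (l : ℝ) * Q ∧ (l : ℝ) * Q < ∑ i ∈ insert b St, ξ i ω}
      ≤ μ {ω | (∑ i ∈ St ∪ A, ξ i ω) ≤ (l : ℝ) * Q ∧
               (l : ℝ) * Q < ∑ i ∈ insert b (St ∪ A), ξ i ω} := by
  revert hdisj hbA
  induction A using Finset.induction_on with
  | empty => intro _ _; simp
  | insert a A haA ih =>
    intro hdisj hbA
    have hdisj' : Disjoint St A := hdisj.mono_right (Finset.subset_insert _ _)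
    have haS : a ∉ St := fun h => (Finset.disjoint_left.mp hdisj h) (Finset.mem_insert_self a A)
    have hbA' : b ∉ A := fun h => hbA (Finset.mem_insert_of_mem h)
    have hab : a ≠ b := fun h => hbA (h ▸ Finset.mem_insert_self a A)
    calc μ {ω | (∑ i ∈ St, ξ i ω) ≤ (l : ℝ) * Q ∧ (l : ℝ) * Q < ∑ i ∈ insert b St, ξ i ω}
        ≤ μ {ω | (∑ i ∈ St ∪ A, ξ i ω) ≤ (l : ℝ) * Q ∧
               (l : ℝ) * Q < ∑ i ∈ insert b (St ∪ A), ξ i ω} := ih hdisj' hbA'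
      _ ≤ _ := by
          have h := hmono (St ∪ A) a b hab
            (by simp [Finset.mem_union, haS, haA]) (by simp [Finset.mem_union, hbS, hbA']) l hl
          rw [Finset.union_insert]
          exact h
end

section
/- Assume the demands satisfy the monotonicity property. Then the DTD recourse function is superadditive under concatenation: for all paths p1 and p2 on disjoint sets of customers whose concatenation p = (p1, p2) is a path, Q̄^DTD_{p} ≥ Q̄^DTD_{p1} + Q̄^DTD_{p2}, and consequently Q^DTD_{p} ≥ Q^DTD_{p1} + Q^DTD_{p2}. -/
open MeasureTheory ENNReal

/-- Key measure lemma: inserting a set of fresh customers before the boundary increases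
the failure probability, by induction using the monotonicity property. -/
lemma key_measure {Ω N : Type*} [MeasurableSpace Ω] [DecidableEq N]
    (μ : Measure Ω) (ξ : N → Ω → ℝ) (Q : ℝ)
    (hmono : MonotonicityProperty μ ξ Q)
    (r : List N) : ∀ (St : Finset N) (b : N), b ∉ St → b ∉ r → r.Nodup →
    (∀ a ∈ r, a ∉ St) → ∀ l : ℕ,
    μ {ω | (∑ i ∈ St, ξ i ω) ≤ ((l + 1 : ℕ) : ℝ) * Q ∧
           ((l + 1 : ℕ) : ℝ) * Q < ∑ i ∈ insert b St, ξ i ω}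
    ≤ μ {ω | (∑ i ∈ St ∪ r.toFinset, ξ i ω) ≤ ((l + 1 : ℕ) : ℝ) * Q ∧
           ((l + 1 : ℕ) : ℝ) * Q < ∑ i ∈ insert b (St ∪ r.toFinset), ξ i ω} := by
  induction r with
  | nil => intro St b hb _ _ _ l; simp
  | cons a r ih =>
    intro St b hb hbr hnd hdisj l
    have hab : a ≠ b := fun h => hbr (h ▸ (List.mem_cons_self : a ∈ a :: r))
    have haSt : a ∉ St := hdisj a List.mem_cons_self
    have h1 := hmono St a b hab haSt hb (l + 1) (Nat.le_add_left 1 l)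
    have h2 := ih (insert a St) b (by simp [hb, hab.symm] : b ∉ insert a St) (fun h => hbr (List.mem_cons_of_mem a h))
      (List.nodup_cons.mp hnd).2
      (fun x hx => by
        simp only [Finset.mem_insert, not_or]
        exact ⟨fun hxa => (List.nodup_cons.mp hnd).1 (hxa ▸ hx), hdisj x (List.mem_cons_of_mem a hx)⟩) l
    have hset : St ∪ (a :: r).toFinset = insert a St ∪ r.toFinset := by
      ext x; simp [or_comm, or_assoc, or_left_comm]
    rw [hset]
    exact le_trans (by exact_mod_cast h1) h2

lemma qbar_super {Ω N : Type*} [MeasurableSpace Ω] [DecidableEq N]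
    (μ : Measure Ω) (ξ : N → Ω → ℝ) (Q : ℝ) (cF : N → ℝ)
    (hmono : MonotonicityProperty μ ξ Q)
    (p1 p2 : List N) (hp : (p1 ++ p2).Nodup) :
    QbarDTD μ ξ Q cF p1 + QbarDTD μ ξ Q cF p2 ≤ QbarDTD μ ξ Q cF (p1 ++ p2) := by
  obtain ⟨hnd1, hnd2, hdisj⟩ := List.nodup_append'.mp hp
  unfold QbarDTD
  have hlen : (p1 ++ p2).length = p1.length + p2.length := List.length_append
  set F : Fin (p1 ++ p2).length → ℝ≥0∞ := fun j => ∑' l : ℕ,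
    μ {ω | (((p1 ++ p2).take j).map (fun i => ξ i ω)).sum ≤ (l + 1 : ℕ) * Q ∧
           ((l + 1 : ℕ) : ℝ) * Q < (((p1 ++ p2).take (j + 1)).map (fun i => ξ i ω)).sum}
      * ENNReal.ofReal (cF ((p1 ++ p2).get j)) with hF
  have hsplit : ∑ j : Fin (p1 ++ p2).length, F j
      = ∑ i : Fin p1.length, F (finCongr hlen.symm (Fin.castAdd p2.length i))
      + ∑ i : Fin p2.length, F (finCongr hlen.symm (Fin.natAdd p1.length i)) := by
    rw [Fintype.sum_equiv (finCongr hlen) F (fun i => F (finCongr hlen.symm i))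
      (fun x => by simp), Fin.sum_univ_add]
  rw [hsplit]
  have hleft : ∑ i : Fin p1.length, F (finCongr hlen.symm (Fin.castAdd p2.length i))
      = ∑ j : Fin p1.length, ∑' l : ℕ,
        μ {ω | ((p1.take j).map (fun i => ξ i ω)).sum ≤ (l + 1 : ℕ) * Q ∧
           ((l + 1 : ℕ) : ℝ) * Q < ((p1.take (j + 1)).map (fun i => ξ i ω)).sum}
        * ENNReal.ofReal (cF (p1.get j)) := by
    refine Finset.sum_congr rfl fun i _ => ?_
    have hv : ((finCongr hlen.symm (Fin.castAdd p2.length i)) : ℕ) = (i : ℕ) := by simp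
    have ht1 : (p1 ++ p2).take (i : ℕ) = p1.take (i : ℕ) := by
      rw [List.take_append, Nat.sub_eq_zero_of_le i.isLt.le,
        List.take_zero, List.append_nil]
    have ht2 : (p1 ++ p2).take ((i : ℕ) + 1) = p1.take ((i : ℕ) + 1) := by
      rw [List.take_append, Nat.sub_eq_zero_of_le i.isLt,
        List.take_zero, List.append_nil]
    have hg : (p1 ++ p2).get (finCongr hlen.symm (Fin.castAdd p2.length i)) = p1.get i := by
      simp [List.get_eq_getElem, List.getElem_append_left i.isLt]
    rw [hF]
    simp only [hv, hg, ht1, ht2]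
  rw [hleft]
  refine add_le_add_right ?_ _
  refine Finset.sum_le_sum fun i _ => ?_
  -- notation
  set b : N := p2.get i with hb
  set St : Finset N := (p2.take (i : ℕ)).toFinset with hSt
  have htake_nd : (p2.take (i : ℕ)).Nodup := (List.take_sublist _ _).nodup hnd2
  have hcg : (p2.take (i : ℕ)) ++ [b] = p2.take ((i : ℕ) + 1) := by
    rw [hb, List.get_eq_getElem, ← List.concat_eq_append, List.take_concat_get]
  have htake1_nd : (p2.take ((i : ℕ) + 1)).Nodup := (List.take_sublist _ _).nodup hnd2
  have hbSt : b ∉ St := by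
    rw [← hcg] at htake1_nd
    simp only [List.nodup_append', List.nodup_cons, List.disjoint_singleton] at htake1_nd
    simpa [hSt] using htake1_nd.2.2
  have hbp1 : b ∉ p1 := fun h => (hdisj h) (by rw [hb, List.get_eq_getElem]; exact List.getElem_mem _)
  have hdisj' : ∀ a ∈ p1, a ∉ St := fun a ha => by
    simp only [hSt, List.mem_toFinset]
    exact fun hmem => hdisj ha (List.mem_of_mem_take hmem)
  -- rewrite RHS index data
  have hv : ((finCongr hlen.symm (Fin.natAdd p1.length i)) : ℕ) = p1.length + (i : ℕ) := by simp
  have ht1 : (p1 ++ p2).take (p1.length + (i : ℕ)) = p1 ++ p2.take (i : ℕ) := by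
    rw [List.take_append, List.take_of_length_le (Nat.le_add_right _ _),
      Nat.add_sub_cancel_left]
  have ht2 : (p1 ++ p2).take (p1.length + (i : ℕ) + 1) = p1 ++ p2.take ((i : ℕ) + 1) := by
    rw [List.take_append, List.take_of_length_le (by omega),
      show p1.length + (i : ℕ) + 1 - p1.length = (i : ℕ) + 1 by omega]
  have hg : (p1 ++ p2).get (finCongr hlen.symm (Fin.natAdd p1.length i)) = b := by
    rw [hb, List.get_eq_getElem, List.get_eq_getElem]
    rw [List.getElem_append_right (by simp)]
    simp
  rw [hF]
  simp only [hv, hg, ht1, ht2]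
  refine Summable.tsum_le_tsum (fun l => ?_) ENNReal.summable ENNReal.summable
  refine mul_le_mul_left ?_ _
  have hLset : {ω | ((p2.take (i : ℕ)).map (fun i => ξ i ω)).sum ≤ (l + 1 : ℕ) * Q ∧
      ((l + 1 : ℕ) : ℝ) * Q < ((p2.take ((i : ℕ) + 1)).map (fun i => ξ i ω)).sum}
      = {ω | (∑ x ∈ St, ξ x ω) ≤ ((l + 1 : ℕ) : ℝ) * Q ∧
          ((l + 1 : ℕ) : ℝ) * Q < ∑ x ∈ insert b St, ξ x ω} := by
    ext ω
    have e1 : ((p2.take (i : ℕ)).map (fun i => ξ i ω)).sum = ∑ x ∈ St, ξ x ω :=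
      (List.sum_toFinset _ htake_nd).symm
    have e2 : ((p2.take ((i : ℕ) + 1)).map (fun i => ξ i ω)).sum
        = ∑ x ∈ insert b St, ξ x ω := by
      rw [Finset.sum_insert hbSt, ← e1, ← hcg]
      simp [add_comm]
    simp only [Set.mem_setOf_eq, e1, e2]
  have hRset : {ω | ((p1 ++ p2.take (i : ℕ)).map (fun i => ξ i ω)).sum ≤ (l + 1 : ℕ) * Q ∧
      ((l + 1 : ℕ) : ℝ) * Q < ((p1 ++ p2.take ((i : ℕ) + 1)).map (fun i => ξ i ω)).sum}
      = {ω | (∑ x ∈ St ∪ p1.toFinset, ξ x ω) ≤ ((l + 1 : ℕ) : ℝ) * Q ∧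
          ((l + 1 : ℕ) : ℝ) * Q < ∑ x ∈ insert b (St ∪ p1.toFinset), ξ x ω} := by
    ext ω
    have hdisjF : Disjoint St p1.toFinset := by
      rw [Finset.disjoint_right]
      intro a ha
      exact hdisj' a (List.mem_toFinset.mp ha)
    have e0 : (p1.map (fun i => ξ i ω)).sum = ∑ x ∈ p1.toFinset, ξ x ω :=
      (List.sum_toFinset _ hnd1).symm
    have e1 : ((p2.take (i : ℕ)).map (fun i => ξ i ω)).sum = ∑ x ∈ St, ξ x ω :=
      (List.sum_toFinset _ htake_nd).symm
    have e3 : ((p1 ++ p2.take (i : ℕ)).map (fun i => ξ i ω)).sum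
        = ∑ x ∈ St ∪ p1.toFinset, ξ x ω := by
      rw [Finset.sum_union hdisjF, List.map_append, List.sum_append, e0, e1, add_comm]
    have hbU : b ∉ St ∪ p1.toFinset := by
      simp only [Finset.mem_union, not_or]
      exact ⟨hbSt, fun h => hbp1 (List.mem_toFinset.mp h)⟩
    have e4 : ((p1 ++ p2.take ((i : ℕ) + 1)).map (fun i => ξ i ω)).sum
        = ∑ x ∈ insert b (St ∪ p1.toFinset), ξ x ω := by
      rw [Finset.sum_insert hbU, ← e3, ← hcg]
      simp [List.map_append, List.sum_append]
      ring
    simp only [Set.mem_setOf_eq, e3, e4]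
  rw [hLset, hRset]
  exact key_measure μ ξ Q hmono p1 St b hbSt hbp1 hnd1 hdisj' l

/-- under the monotonicity property, the DTD recourse function is
superadditive under concatenation, both for the fixed-orientation cost `Q̄ᴰᵀᴰ` and
consequently for the best-orientation cost `Qᴰᵀᴰ`. -/
theorem dtd_superadditive
    {Ω N : Type*} [MeasurableSpace Ω] [Fintype N] [DecidableEq N]
    (μ : Measure Ω) [IsProbabilityMeasure μ]
    (ξ : N → Ω → ℝ) (hmeas : ∀ i, Measurable (ξ i)) (hξ : ∀ i ω, 0 ≤ ξ i ω)
    (Q : ℝ) (hQ : 0 < Q) (cF : N → ℝ) (hcF : ∀ i, 0 ≤ cF i)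
    (hmono : MonotonicityProperty μ ξ Q)
    (p1 p2 : List N) (hp : (p1 ++ p2).Nodup) :
    QbarDTD μ ξ Q cF p1 + QbarDTD μ ξ Q cF p2 ≤ QbarDTD μ ξ Q cF (p1 ++ p2) ∧
    QDTD μ ξ Q cF p1 + QDTD μ ξ Q cF p2 ≤ QDTD μ ξ Q cF (p1 ++ p2) := by
  have h1 := qbar_super μ ξ Q cF hmono p1 p2 hp
  have hrev : (p2.reverse ++ p1.reverse).Nodup := by
    rw [← List.reverse_append]
    exact List.nodup_reverse.mpr hp
  have h2 := qbar_super μ ξ Q cF hmono p2.reverse p1.reverse hrev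
  refine ⟨h1, ?_⟩
  unfold QDTD
  rw [List.reverse_append]
  refine le_min ?_ ?_
  · exact le_trans (add_le_add (min_le_left _ _) (min_le_left _ _)) h1
  · refine le_trans (add_le_add (min_le_right _ _) (min_le_right _ _)) ?_
    rw [add_comm]
    exact h2
end

section
/- Under the optimal-restocking (OR) policy, the expected cost-to-go is non-increasing in the residual capacity: for every previous customer i, every list L of remaining distinct customers, and all residual capacities q1, q2 with 0 ≤ q1 ≤ q2 ≤ Q, one has F(i, L, q1) ≥ F(i, L, q2), and likewise H(L, q1) ≥ H(L, q2) for nonempty L. -/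
open ENNReal

/-- `Ψ(s, q) = max(⌈(s − q)/Q⌉, 0)`: the number of restocking trips needed to serve a
demand of `s` units from residual capacity `q`, with vehicle capacity `Q`. -/
noncomputable def psi (Q s q : ℕ) : ℕ := (⌈((s : ℚ) - (q : ℚ)) / (Q : ℚ)⌉).toNat

/-- The optimal-restocking (OR) expected cost-to-go `F(i, L, q)` after serving customer
`i`, with remaining customers `L` and residual capacity `q`:
`F(i, (), q) = 0` and `F(i, j :: L', q) = min{ H(j :: L', q), c^P_{i,j} + H(j :: L', Q) }`,
where `H(j :: L', q) = ∑_s [ c^F_j Ψ(s,q) + F(j, L', Ψ(s,q)Q + q − s) ] ρ_j(s)`. -/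
noncomputable def orF {N : Type*} (ρ : N → PMF ℕ) (Q : ℕ) (cF : N → ℝ) (cP : N → N → ℝ) :
    N → List N → ℕ → ℝ≥0∞
  | _, [], _ => 0
  | i, j :: L', q =>
    min
      (∑' s : ℕ, (ENNReal.ofReal (cF j) * (psi Q s q : ℝ≥0∞)
          + orF ρ Q cF cP j L' (psi Q s q * Q + q - s)) * ρ j s)
      (ENNReal.ofReal (cP i j) +
        ∑' s : ℕ, (ENNReal.ofReal (cF j) * (psi Q s Q : ℝ≥0∞)
          + orF ρ Q cF cP j L' (psi Q s Q * Q + Q - s)) * ρ j s)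

/-- The OR cost-to-go `H(j :: L', q)` of proceeding directly to customer `j` with residual
capacity `q`, when the remaining customers after `j` are `L'`. -/
noncomputable def orH {N : Type*} (ρ : N → PMF ℕ) (Q : ℕ) (cF : N → ℝ) (cP : N → N → ℝ)
    (j : N) (L' : List N) (q : ℕ) : ℝ≥0∞ :=
  ∑' s : ℕ, (ENNReal.ofReal (cF j) * (psi Q s q : ℝ≥0∞)
      + orF ρ Q cF cP j L' (psi Q s q * Q + q - s)) * ρ j s

/-!
By induction on the list of remaining customers. From any residual capacity one may return
preventively and go on with a full vehicle, at cost `c^P_{j,k} ≤ c^F_j` (triangle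
inequality); hence `F(j, L, ·)` varies by at most `c^F_j` on `[0, Q]`. Raising the residual
capacity either keeps the number of failures `Ψ` and leaves more capacity, or saves at least
one failure of cost `c^F_j`, which pays for any loss of residual capacity. Summing over the
demand gives the antitonicity of `H`, and `F` is a minimum of `H` and a constant.
-/

open Set

lemma psi_antitone (Q s : ℕ) : Antitone (psi Q s) := fun _ _ h =>
  Int.toNat_le_toNat <| Int.ceil_le_ceil <|
    div_le_div_of_nonneg_right (by gcongr) (Nat.cast_nonneg Q)

lemma psi_mul_add_sub_le {Q s q : ℕ} (hq : q ≤ Q) : psi Q s q * Q + q - s ≤ Q := by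
  rcases Nat.eq_zero_or_pos Q with rfl | hQ
  · omega
  have hQ' : (0 : ℚ) < Q := by exact_mod_cast hQ
  set x : ℚ := ((s : ℚ) - q) / Q
  rcases le_or_gt ⌈x⌉ 0 with hx | hx
  · rw [show psi Q s q = 0 from Int.toNat_eq_zero.mpr hx]
    omega
  · have hpsi : (psi Q s q : ℚ) = ⌈x⌉ := by exact_mod_cast Int.toNat_of_nonneg hx.le
    have hlt : (psi Q s q : ℚ) * Q < (s - q) + Q := by
      calc (psi Q s q : ℚ) * Q < (x + 1) * Q := by
            rw [hpsi]; exact mul_lt_mul_of_pos_right (Int.ceil_lt_add_one x) hQ'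
        _ = (s - q) + Q := by simp only [x]; field_simp
    have : ((psi Q s q * Q + q : ℕ) : ℚ) < (Q + s : ℕ) := by push_cast; linarith
    exact Nat.sub_le_of_le_add (by exact_mod_cast this.le)

lemma restock_cost_antitoneOn {Q s : ℕ} {c : ℝ≥0∞} {f : ℕ → ℝ≥0∞}
    (hf : AntitoneOn f (Iic Q)) (hgap : ∀ a ∈ Iic Q, ∀ b ∈ Iic Q, f a ≤ c + f b) :
    AntitoneOn (fun q => c * psi Q s q + f (psi Q s q * Q + q - s)) (Iic Q) := by
  intro q1 hq1 q2 hq2 h12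
  have hr1 : psi Q s q1 * Q + q1 - s ∈ Iic Q := psi_mul_add_sub_le hq1
  have hr2 : psi Q s q2 * Q + q2 - s ∈ Iic Q := psi_mul_add_sub_le hq2
  rcases (psi_antitone Q s h12).eq_or_lt with heq | hlt
  · simp only [heq] at hr2 ⊢
    gcongr c * _ + ?_
    exact hf hr1 hr2 (by omega)
  · calc c * psi Q s q2 + f (psi Q s q2 * Q + q2 - s)
        ≤ c * psi Q s q2 + (c + f (psi Q s q1 * Q + q1 - s)) := by gcongr; exact hgap _ hr2 _ hr1
      _ = c * (psi Q s q2 + 1 : ℕ) + f (psi Q s q1 * Q + q1 - s) := by push_cast; ring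
      _ ≤ c * psi Q s q1 + f (psi Q s q1 * Q + q1 - s) := by gcongr; exact hlt

section OptimalRestocking

variable {N : Type*} {ρ : N → PMF ℕ} {Q : ℕ} {cF : N → ℝ} {cP : N → N → ℝ}

lemma orF_cons (i j : N) (L : List N) (q : ℕ) :
    orF ρ Q cF cP i (j :: L) q =
      min (orH ρ Q cF cP j L q) (ENNReal.ofReal (cP i j) + orH ρ Q cF cP j L Q) := rfl

lemma orF_cons_antitoneOn {j : N} {L : List N} (hH : AntitoneOn (orH ρ Q cF cP j L) (Iic Q))
    (i : N) : AntitoneOn (orF ρ Q cF cP i (j :: L)) (Iic Q) := fun _ ha _ hb hab => by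
  simp only [orF_cons]
  exact min_le_min_right _ (hH ha hb hab)

lemma orF_cons_le_add {j k : N} {L : List N} (hcPF : cP j k ≤ cF j)
    (hF : AntitoneOn (orF ρ Q cF cP j (k :: L)) (Iic Q)) :
    ∀ a ∈ Iic Q, ∀ b ∈ Iic Q,
      orF ρ Q cF cP j (k :: L) a ≤ ENNReal.ofReal (cF j) + orF ρ Q cF cP j (k :: L) b := by
  intro a ha b hb
  have hfull : orF ρ Q cF cP j (k :: L) Q = orH ρ Q cF cP k L Q :=
    min_eq_left le_add_self
  calc orF ρ Q cF cP j (k :: L) a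
      ≤ orF ρ Q cF cP j (k :: L) 0 := hF (Nat.zero_le Q) ha (Nat.zero_le a)
    _ ≤ ENNReal.ofReal (cP j k) + orF ρ Q cF cP j (k :: L) Q := by
        rw [hfull]; exact min_le_right _ _
    _ ≤ ENNReal.ofReal (cF j) + orF ρ Q cF cP j (k :: L) b := by
        gcongr
        exact hF hb self_mem_Iic hb

lemma orH_antitoneOn_of_orF {j : N} {L : List N} (hF : AntitoneOn (orF ρ Q cF cP j L) (Iic Q))
    (hgap : ∀ a ∈ Iic Q, ∀ b ∈ Iic Q,
      orF ρ Q cF cP j L a ≤ ENNReal.ofReal (cF j) + orF ρ Q cF cP j L b) :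
    AntitoneOn (orH ρ Q cF cP j L) (Iic Q) := fun _ ha _ hb hab =>
  ENNReal.tsum_le_tsum fun _ => mul_le_mul_left (restock_cost_antitoneOn hF hgap ha hb hab) _

lemma orH_antitoneOn (hcPF : ∀ a b, cP a b ≤ cF a) (j : N) (L : List N) :
    AntitoneOn (orH ρ Q cF cP j L) (Iic Q) := by
  induction L generalizing j with
  | nil =>
    refine orH_antitoneOn_of_orF (fun _ _ _ _ _ => le_rfl) fun _ _ _ _ => ?_
    simp [orF]
  | cons k L ih =>
    have hF := orF_cons_antitoneOn (ih k) j
    exact orH_antitoneOn_of_orF hF (orF_cons_le_add (hcPF j k) hF)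

end OptimalRestocking

theorem or_cost_to_go_monotone_general
    {N : Type*} (ρ : N → PMF ℕ) (Q : ℕ)
    (bP bF : ℝ) (hbPF : bP ≤ bF)
    (c0 : N → ℝ) (c : N → N → ℝ)
    (htri1 : ∀ i j, c0 j ≤ c0 i + c i j)
    (i : N) (L : List N)
    (q1 q2 : ℕ) (h12 : q1 ≤ q2) (h2Q : q2 ≤ Q) :
    orF ρ Q (fun a => bF + 2 * c0 a) (fun a b => bP + c0 a + c0 b - c a b) i L q2
      ≤ orF ρ Q (fun a => bF + 2 * c0 a) (fun a b => bP + c0 a + c0 b - c a b) i L q1 ∧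
    (∀ (j : N) (L' : List N), L = j :: L' →
      orH ρ Q (fun a => bF + 2 * c0 a) (fun a b => bP + c0 a + c0 b - c a b) j L' q2
        ≤ orH ρ Q (fun a => bF + 2 * c0 a) (fun a b => bP + c0 a + c0 b - c a b) j L' q1) := by
  have hcPF : ∀ a b, bP + c0 a + c0 b - c a b ≤ bF + 2 * c0 a := fun a b => by
    linarith [htri1 a b]
  have hH := orH_antitoneOn (ρ := ρ) (Q := Q) hcPF
  have hq1 : q1 ∈ Iic Q := h12.trans h2Q
  refine ⟨?_, fun j L' _ => hH j L' hq1 h2Q h12⟩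
  cases L with
  | nil => exact le_rfl
  | cons j L' => exact orF_cons_antitoneOn (hH j L') i hq1 h2Q h12

/-- under the OR policy, the expected cost-to-go is non-increasing in the
residual capacity: `F(i, L, q₁) ≥ F(i, L, q₂)` for `0 ≤ q₁ ≤ q₂ ≤ Q`, and likewise
`H(L, q₁) ≥ H(L, q₂)` for nonempty `L`. -/
theorem or_cost_to_go_monotone
    {N : Type*} (ρ : N → PMF ℕ) (Q : ℕ) (hQ : 1 ≤ Q)
    (hmean : ∀ i, ∑' s : ℕ, (s : ℝ≥0∞) * ρ i s ≠ ⊤)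
    (bP bF : ℝ) (hbP : 0 ≤ bP) (hbPF : bP ≤ bF)
    (c0 : N → ℝ) (c : N → N → ℝ)
    (hc0 : ∀ i, 0 ≤ c0 i) (hc : ∀ i j, 0 ≤ c i j) (hsymm : ∀ i j, c i j = c j i)
    (htri1 : ∀ i j, c0 j ≤ c0 i + c i j)
    (htri2 : ∀ i j, c i j ≤ c0 i + c0 j)
    (htri3 : ∀ i j k, c i k ≤ c i j + c j k)
    (i : N) (L : List N) (hL : (i :: L).Nodup)
    (q1 q2 : ℕ) (h12 : q1 ≤ q2) (h2Q : q2 ≤ Q) :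
    orF ρ Q (fun a => bF + 2 * c0 a) (fun a b => bP + c0 a + c0 b - c a b) i L q2
      ≤ orF ρ Q (fun a => bF + 2 * c0 a) (fun a b => bP + c0 a + c0 b - c a b) i L q1 ∧
    (∀ (j : N) (L' : List N), L = j :: L' →
      orH ρ Q (fun a => bF + 2 * c0 a) (fun a b => bP + c0 a + c0 b - c a b) j L' q2
        ≤ orH ρ Q (fun a => bF + 2 * c0 a) (fun a b => bP + c0 a + c0 b - c a b) j L' q1) :=
  or_cost_to_go_monotone_general ρ Q bP bF hbPF c0 c htri1 i L q1 q2 h12 h2Q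
end

section
/- There exists an instance of the VRPSD under the detour-to-depot policy for which subsequence monotonicity of the recourse does not imply superadditivity: there exist a finite customer set with nonnegative random demands, a capacity Q > 0, nonnegative failure costs, and a path p of distinct customers such that Q̄^DTD_{p} ≥ Q̄^DTD_{p'} for every subsequence p' of p, yet there exist nonempty paths p1, p2 with p = (p1, p2) and Q̄^DTD_{p} < Q̄^DTD_{p1} + Q̄^DTD_{p2}. -/
open MeasureTheory ENNReal

namespace DTDcex

noncomputable def μB : Measure Bool :=
  (1/2 : ℝ≥0∞) • Measure.dirac false + (1/2 : ℝ≥0∞) • Measure.dirac true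

instance : IsProbabilityMeasure μB := by
  constructor
  simp [μB, ENNReal.inv_two_add_inv_two]

open Classical in
lemma mu_apply (s : Set Bool) :
    μB s = (if false ∈ s then 1/2 else 0) + (if true ∈ s then 1/2 else 0) := by
  simp [μB, Measure.dirac_apply' _ (MeasurableSet.of_discrete), Set.indicator]

noncomputable def xi : Fin 3 → Bool → ℝ := fun i ω => if ω then ![15,0,0] i else ![5,8,5] i
noncomputable def cf : Fin 3 → ℝ := ![1,0,1]

lemma tsum_single (g : ℕ → Set Bool) (c : ℝ≥0∞)
    (h : ∀ l, l ≠ 0 → g l = ∅) :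
    ∑' l : ℕ, μB (g l) * c = μB (g 0) * c :=
  tsum_eq_single 0 fun l hl => by simp [h l hl]

lemma big_lem (l : ℕ) (hl : l ≠ 0) : (20:ℝ) ≤ ((l+1:ℕ):ℝ) * 10 := by
  have : (1:ℕ) ≤ l := Nat.one_le_iff_ne_zero.mpr hl
  have : (1:ℝ) ≤ (l:ℝ) := by exact_mod_cast this
  push_cast
  nlinarith

lemma val_nil : QbarDTD μB xi 10 cf [] = 0 := by
  rw [QbarDTD]; simp

lemma val_012 : QbarDTD μB xi 10 cf [0,1,2] = 1/2 := by
  rw [QbarDTD]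
  simp only [List.length_cons, List.length_nil, Nat.reduceAdd, Fin.sum_univ_three]
  rw [tsum_single, tsum_single, tsum_single]
  · norm_num [mu_apply, xi, cf]
  all_goals {
    intro l hl
    have h20 := big_lem l hl
    ext ω
    simp only [Set.mem_setOf_eq, Set.mem_empty_iff_false, iff_false, not_and, not_lt]
    intro h1
    cases ω <;> simp_all [xi] <;> nlinarith }

lemma val2 (a b : Fin 3) (hab : a ≠ b) : QbarDTD μB xi 10 cf [a,b] =
    μB {ω | 0 ≤ (1:ℕ) * 10 ∧ ((1:ℕ):ℝ) * 10 < xi a ω} * ENNReal.ofReal (cf a)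
    + μB {ω | xi a ω ≤ (1:ℕ) * 10 ∧ ((1:ℕ):ℝ) * 10 < xi a ω + xi b ω} * ENNReal.ofReal (cf b) := by
  rw [QbarDTD]
  simp only [List.length_cons, List.length_nil, Nat.reduceAdd, Fin.sum_univ_two]
  rw [tsum_single, tsum_single]
  · norm_num
  all_goals {
    intro l hl
    have h20 := big_lem l hl
    ext ω
    simp only [Set.mem_setOf_eq, Set.mem_empty_iff_false, iff_false, not_and, not_lt]
    intro h1
    fin_cases a <;> fin_cases b <;> cases ω <;> simp_all [xi] <;> nlinarith }

lemma val1 (a : Fin 3) : QbarDTD μB xi 10 cf [a] =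
    μB {ω | 0 ≤ (1:ℕ) * 10 ∧ ((1:ℕ):ℝ) * 10 < xi a ω} * ENNReal.ofReal (cf a) := by
  rw [QbarDTD]
  simp only [List.length_cons, List.length_nil, Nat.reduceAdd, Fin.sum_univ_one]
  rw [tsum_single]
  · norm_num
  · intro l hl
    have h20 := big_lem l hl
    ext ω
    simp only [Set.mem_setOf_eq, Set.mem_empty_iff_false, iff_false, not_and, not_lt]
    intro h1
    fin_cases a <;> cases ω <;> simp_all [xi] <;> nlinarith

lemma val_0 : QbarDTD μB xi 10 cf [0] = 1/2 := by
  rw [val1]; norm_num [mu_apply, xi, cf]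

lemma val_1 : QbarDTD μB xi 10 cf [1] = 0 := by
  rw [val1]; norm_num [mu_apply, xi, cf]

lemma val_2 : QbarDTD μB xi 10 cf [2] = 0 := by
  rw [val1]; norm_num [mu_apply, xi, cf, Matrix.cons_val_two]

lemma val_01 : QbarDTD μB xi 10 cf [0,1] = 1/2 := by
  rw [val2 _ _ (by decide)]; norm_num [mu_apply, xi, cf]

lemma val_02 : QbarDTD μB xi 10 cf [0,2] = 1/2 := by
  rw [val2 _ _ (by decide)]; norm_num [mu_apply, xi, cf, Matrix.cons_val_two]

lemma val_12 : QbarDTD μB xi 10 cf [1,2] = 1/2 := by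
  rw [val2 _ _ (by decide)]; norm_num [mu_apply, xi, cf, Matrix.cons_val_two]

end DTDcex

/-- there exists a VRPSD instance under the DTD policy and a path `p` whose
DTD recourse dominates that of each of its subsequences, yet which splits into two
nonempty paths `p1, p2` with `Q̄ᴰᵀᴰ_p < Q̄ᴰᵀᴰ_{p1} + Q̄ᴰᵀᴰ_{p2}`: subsequence monotonicity
of the recourse does not imply superadditivity. -/
theorem dtd_subsequence_monotone_not_superadditive :
    ∃ (Ω : Type) (mΩ : MeasurableSpace Ω) (μ : @Measure Ω mΩ)
      (_ : @IsProbabilityMeasure Ω mΩ μ)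
      (n : ℕ) (ξ : Fin n → Ω → ℝ) (Q : ℝ) (cF : Fin n → ℝ) (p : List (Fin n)),
      (∀ i, @Measurable Ω ℝ mΩ _ (ξ i)) ∧
      (∀ i ω, 0 ≤ ξ i ω) ∧ 0 < Q ∧ (∀ i, 0 ≤ cF i) ∧ p.Nodup ∧
      (∀ p' : List (Fin n), List.Sublist p' p →
        @QbarDTD Ω (Fin n) mΩ μ ξ Q cF p' ≤ @QbarDTD Ω (Fin n) mΩ μ ξ Q cF p) ∧
      (∃ p1 p2 : List (Fin n), p1 ≠ [] ∧ p2 ≠ [] ∧ p = p1 ++ p2 ∧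
        @QbarDTD Ω (Fin n) mΩ μ ξ Q cF p
          < @QbarDTD Ω (Fin n) mΩ μ ξ Q cF p1 + @QbarDTD Ω (Fin n) mΩ μ ξ Q cF p2) := by
  open DTDcex in
  refine ⟨Bool, inferInstance, μB, inferInstance, 3, xi, 10, cf, [0,1,2],
    fun i => Measurable.of_discrete, ?_, by norm_num, ?_, by decide, ?_, ⟨[0], [1,2], by simp,
      by simp, rfl, ?_⟩⟩
  · intro i ω
    fin_cases i <;> cases ω <;> norm_num [xi]
  · intro i
    fin_cases i <;> norm_num [cf]
  · intro p' hp'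
    rw [← List.mem_sublists] at hp'
    fin_cases hp' <;>
      simp_all [DTDcex.val_nil, DTDcex.val_0, DTDcex.val_1, DTDcex.val_2, DTDcex.val_01,
        DTDcex.val_02, DTDcex.val_12, DTDcex.val_012]
  · rw [DTDcex.val_012, DTDcex.val_0, DTDcex.val_12,
      show (1:ℝ≥0∞)/2 + 1/2 = 1 from ENNReal.add_halves 1]
    exact ENNReal.half_lt_self one_ne_zero one_ne_top
end
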